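/- In the Lie algebra 𝔤 with brackets [x,y] = αy + αz, [y,z] = 2αx, [z,x] = αy + αz and the inner product λ²·(standard inner product on the basis {x,y,z}), the curvature tensor of the Koszul connection vanishes identically: R(u,v)w = 0 for all u,v,w ∈ 𝔤. -/
import Mathlib

/-- The bracket of the 3-dimensional Lie algebra with basis `x = e₀, y = e₁, z = e₂` and
`[x,y] = αy + αz`, `[y,z] = 2αx`, `[z,x] = αy + αz`. -/
def gBracket (α : ℝ) (u v : Fin 3 → ℝ) : Fin 3 → ℝ :=
  ![2 * α * (u 1 * v 2 - u 2 * v 1),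
    α * ((u 0 * v 1 - u 1 * v 0) + (u 2 * v 0 - u 0 * v 2)),
    α * ((u 0 * v 1 - u 1 * v 0) + (u 2 * v 0 - u 0 * v 2))]

/-- The inner product `λ² · (standard inner product)` in the basis `{x,y,z}`. -/
def inner3 (lam : ℝ) (u v : Fin 3 → ℝ) : ℝ :=
  lam ^ 2 * (u 0 * v 0 + u 1 * v 1 + u 2 * v 2)

theorem gAlg_curvature_zero (α : ℝ) (lam : ℝ) (hlam : 0 < lam)
    -- the Levi-Civita (Koszul) connection of the metric `inner3 lam`
    (nabla : (Fin 3 → ℝ) → (Fin 3 → ℝ) → (Fin 3 → ℝ))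
    (hK : ∀ u v w : Fin 3 → ℝ, 2 * inner3 lam (nabla u v) w =
      inner3 lam (gBracket α u v) w - inner3 lam (gBracket α v w) u
        + inner3 lam (gBracket α w u) v) :
    ∀ u v w : Fin 3 → ℝ,
      nabla u (nabla v w) - nabla v (nabla u w) - nabla (gBracket α u v) w = 0 := by
  have hl : (2 : ℝ) * lam ^ 2 ≠ 0 := by positivity
  have hn : ∀ u v : Fin 3 → ℝ, nabla u v =
      ![α * (u 1 - u 2) * (v 1 + v 2), α * (u 2 - u 1) * v 0, α * (u 2 - u 1) * v 0] := by
    intro u v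
    have h0 : nabla u v 0 = α * (u 1 - u 2) * (v 1 + v 2) := by
      have h := hK u v ![1, 0, 0]
      simp only [inner3, gBracket, Matrix.cons_val_zero, Matrix.cons_val_one, Matrix.head_cons,
        Matrix.cons_val_two, Matrix.tail_cons] at h
      refine mul_left_cancel₀ hl ?_; linear_combination h
    have h1 : nabla u v 1 = α * (u 2 - u 1) * v 0 := by
      have h := hK u v ![0, 1, 0]
      simp only [inner3, gBracket, Matrix.cons_val_zero, Matrix.cons_val_one, Matrix.head_cons,
        Matrix.cons_val_two, Matrix.tail_cons] at h
      refine mul_left_cancel₀ hl ?_; linear_combination h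
    have h2 : nabla u v 2 = α * (u 2 - u 1) * v 0 := by
      have h := hK u v ![0, 0, 1]
      simp only [inner3, gBracket, Matrix.cons_val_zero, Matrix.cons_val_one, Matrix.head_cons,
        Matrix.cons_val_two, Matrix.tail_cons] at h
      refine mul_left_cancel₀ hl ?_; linear_combination h
    funext i
    fin_cases i <;> simpa using ‹_›
  intro u v w
  funext i
  have e0 := hn v w
  simp only [hn, gBracket, Pi.sub_apply, Pi.zero_apply]
  fin_cases i <;> simp <;> ring
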